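/- Let G be a finite group with G' not contained in Z(G), and let p be the smallest prime divisor of |G|. Suppose |G : C_G(G')| = p and |G' ∩ Z(G)| = p. Then Z(G)* is a proper subgroup of C_G(G'), and the quotient group C_G(G')/Z(G)* embeds into G'Z(G)/Z(G) (equivalently, into G'/(G' ∩ Z(G))). -/

import Mathlib

open scoped commutatorElement

/-- For a normal subgroup `H` of `G`, `starSubgroup H` is the subgroup
`H* = {x ∈ G : [g,x] ∈ H for all g ∈ G}`. -/
def starSubgroup {G : Type*} [Group G] (H : Subgroup G) [hH : H.Normal] : Subgroup G where
  carrier := {x : G | ∀ g : G, ⁅g, x⁆ ∈ H}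
  one_mem' := by
    intro g
    simpa [commutatorElement_def] using H.one_mem
  mul_mem' := by
    intro x y hx hy g
    have h : ⁅g, x * y⁆ = ⁅g, x⁆ * (x * ⁅g, y⁆ * x⁻¹) := by
      simp only [commutatorElement_def]; group
    show ⁅g, x * y⁆ ∈ H
    rw [h]
    exact H.mul_mem (hx g) (hH.conj_mem _ (hy g) x)
  inv_mem' := by
    intro x hx g
    have h : ⁅g, x⁻¹⁆ = x⁻¹ * ⁅g, x⁆⁻¹ * (x⁻¹)⁻¹ := by
      simp only [commutatorElement_def]; group
    show ⁅g, x⁻¹⁆ ∈ H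
    rw [h]
    exact hH.conj_mem _ (H.inv_mem (hx g)) x⁻¹

section Aux

variable {G : Type*} [Group G]

private lemma mem_commutator' (a b : G) : ⁅a, b⁆ ∈ commutator G := by
  rw [commutator_def]
  exact Subgroup.commutator_mem_commutator (Subgroup.mem_top a) (Subgroup.mem_top b)

private lemma conj_center {z : G} (hz : z ∈ Subgroup.center G) (a : G) :
    a * z * a⁻¹ = z := by
  rw [Subgroup.mem_center_iff.mp hz a, mul_inv_cancel_right]

/-- The set of elements whose commutator with `x` is central forms a subgroup. -/
private def commCentral (x : G) : Subgroup G where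
  carrier := {h : G | ⁅h, x⁆ ∈ Subgroup.center G}
  one_mem' := by
    show ⁅(1 : G), x⁆ ∈ Subgroup.center G
    have h : ⁅(1 : G), x⁆ = 1 := by simp only [commutatorElement_def]; group
    rw [h]; exact Subgroup.one_mem _
  mul_mem' := by
    intro a b ha hb
    have ha' : ⁅a, x⁆ ∈ Subgroup.center G := ha
    have hb' : ⁅b, x⁆ ∈ Subgroup.center G := hb
    show ⁅a * b, x⁆ ∈ Subgroup.center G
    have h : ⁅a * b, x⁆ = a * ⁅b, x⁆ * a⁻¹ * ⁅a, x⁆ := by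
      simp only [commutatorElement_def]; group
    rw [h, conj_center hb' a]
    exact Subgroup.mul_mem _ hb' ha' 
  inv_mem' := by
    intro a ha
    have ha' : ⁅a, x⁆ ∈ Subgroup.center G := ha
    show ⁅a⁻¹, x⁆ ∈ Subgroup.center G
    have h : ⁅a⁻¹, x⁆ = a⁻¹ * ⁅a, x⁆⁻¹ * a⁻¹⁻¹ := by
      simp only [commutatorElement_def]; group
    rw [h, conj_center (Subgroup.inv_mem _ ha') a⁻¹]
    exact Subgroup.inv_mem _ ha' 

private lemma mem_commCentral {x h : G} :
    h ∈ commCentral x ↔ ⁅h, x⁆ ∈ Subgroup.center G := Iff.rfl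

private lemma mem_starSubgroup' {H : Subgroup G} [H.Normal] {x : G} :
    x ∈ starSubgroup H ↔ ∀ g : G, ⁅g, x⁆ ∈ H := Iff.rfl

/-- `Z(G)* ≤ C_G(G')`. -/
private lemma starSubgroup_center_le :
    starSubgroup (Subgroup.center G) ≤ Subgroup.centralizer (commutator G : Set G) := by
  intro x hx
  have hx' : ∀ g : G, ⁅g, x⁆ ∈ Subgroup.center G := hx
  let φ : G →* G :=
    { toFun := fun g => ⁅g, x⁆
      map_one' := by simp only [commutatorElement_def]; group
      map_mul' := by
        intro a b
        show ⁅a * b, x⁆ = ⁅a, x⁆ * ⁅b, x⁆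
        have h : ⁅a * b, x⁆ = a * ⁅b, x⁆ * a⁻¹ * ⁅a, x⁆ := by
          simp only [commutatorElement_def]; group
        rw [h, conj_center (hx' b) a]
        exact Subgroup.mem_center_iff.mp (hx' a) ⁅b, x⁆ }
  have key : ∀ a b : G, ⁅⁅a, b⁆, x⁆ = 1 := by
    intro a b
    have h2 : ⁅⁅a, x⁆, ⁅b, x⁆⁆ = 1 :=
      commutatorElement_eq_one_iff_commute.mpr
        (Subgroup.mem_center_iff.mp (hx' b) ⁅a, x⁆)
    calc ⁅⁅a, b⁆, x⁆ = φ ⁅a, b⁆ := rfl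
      _ = ⁅φ a, φ b⁆ := map_commutatorElement φ a b
      _ = 1 := h2
  have hle : commutator G ≤ Subgroup.centralizer ({x} : Set G) := by
    rw [commutator_def, Subgroup.commutator_le]
    intro a _ b _
    rw [Subgroup.mem_centralizer_iff]
    intro h hh
    rw [Set.mem_singleton_iff] at hh
    subst hh
    exact (Commute.symm (commutatorElement_eq_one_iff_commute.mp (key a b))).eq
  rw [Subgroup.mem_centralizer_iff]
  intro u hu
  exact (Subgroup.mem_centralizer_iff.mp (hle hu) x (Set.mem_singleton x)).symm

private lemma sup_closure_singleton_eq_top {p : ℕ} (hp : p.Prime) {C : Subgroup G}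
    (hidx : C.index = p) {g : G} (hg : g ∉ C) :
    C ⊔ Subgroup.closure {g} = ⊤ := by
  have hCK : C ≤ C ⊔ Subgroup.closure {g} := le_sup_left
  have hrel : C.relIndex (C ⊔ Subgroup.closure {g}) * (C ⊔ Subgroup.closure {g}).index = p := by
    rw [Subgroup.relIndex_mul_index hCK, hidx]
  have hdvd : (C ⊔ Subgroup.closure {g}).index ∣ p := Dvd.intro_left _ hrel
  rcases hp.eq_one_or_self_of_dvd _ hdvd with h1 | h2
  · exact Subgroup.index_eq_one.mp h1
  · exfalso
    have hone : C.relIndex (C ⊔ Subgroup.closure {g}) = 1 := by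
      apply Nat.eq_of_mul_eq_mul_right hp.pos
      rw [one_mul]
      rw [h2] at hrel
      exact hrel
    have hgK : g ∈ C ⊔ Subgroup.closure {g} :=
      (le_sup_right : Subgroup.closure {g} ≤ _)
        (Subgroup.subset_closure (Set.mem_singleton g))
    exact hg (Subgroup.relIndex_eq_one.mp hone hgK)

private lemma centralizer_commutator_normal :
    (Subgroup.centralizer (commutator G : Set G)).Normal := by
  constructor
  intro x hx h
  rw [Subgroup.mem_centralizer_iff] at hx ⊢
  intro u hu
  have hu' : h⁻¹ * u * h ∈ commutator G := by
    have hN : (commutator G).Normal := inferInstance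
    simpa using hN.conj_mem u hu h⁻¹
  have hx' := hx _ hu'
  calc u * (h * x * h⁻¹) = h * (h⁻¹ * u * h * x) * h⁻¹ := by group
    _ = h * (x * (h⁻¹ * u * h)) * h⁻¹ := by rw [hx']
    _ = h * x * h⁻¹ * u := by group

/-- Under the prime-index hypothesis, `G'` is contained in its own centralizer
(i.e. `G'` is abelian). -/
private lemma commutator_le_centralizer_self {p : ℕ} (hp : p.Prime)
    (hidx : (Subgroup.centralizer (commutator G : Set G)).index = p) :
    commutator G ≤ Subgroup.centralizer (commutator G : Set G) := by
  haveI : Fact p.Prime := ⟨hp⟩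
  haveI hnorm : (Subgroup.centralizer (commutator G : Set G)).Normal :=
    centralizer_commutator_normal
  have hcard : Nat.card (G ⧸ Subgroup.centralizer (commutator G : Set G)) = p := by
    rw [← Subgroup.index_eq_card]; exact hidx
  haveI : IsCyclic (G ⧸ Subgroup.centralizer (commutator G : Set G)) :=
    isCyclic_of_prime_card hcard
  have hker : ((QuotientGroup.mk' (Subgroup.centralizer (commutator G : Set G))).comp
      (commutator G).subtype).ker ≤ Subgroup.center ↥(commutator G) := by
    intro u hu
    rw [MonoidHom.mem_ker, MonoidHom.comp_apply, Subgroup.coe_subtype,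
      QuotientGroup.mk'_apply, QuotientGroup.eq_one_iff] at hu
    rw [Subgroup.mem_center_iff]
    intro v
    apply Subtype.ext
    show (v : G) * (u : G) = (u : G) * (v : G)
    exact Subgroup.mem_centralizer_iff.mp hu (v : G) v.2
  have hcomm := commutative_of_cyclic_center_quotient _ hker
  intro u hu
  rw [Subgroup.mem_centralizer_iff]
  intro h hh
  have := hcomm ⟨h, hh⟩ ⟨u, hu⟩
  exact Subtype.ext_iff.mp this

/-- For any `h : G`, the map `y ↦ ⁅h, y⁆` is a homomorphism on `C_G(G')`. -/
private def commHomAux (h : G) :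
    ↥(Subgroup.centralizer (commutator G : Set G)) →* G where
  toFun y := ⁅h, (y : G)⁆
  map_one' := by simp only [OneMemClass.coe_one, commutatorElement_def]; group
  map_mul' y y' := by
    show ⁅h, (y : G) * (y' : G)⁆ = ⁅h, (y : G)⁆ * ⁅h, (y' : G)⁆
    have h1 : ⁅h, (y : G) * (y' : G)⁆
        = ⁅h, (y : G)⁆ * ((y : G) * ⁅h, (y' : G)⁆ * (y : G)⁻¹) := by
      simp only [commutatorElement_def]; group
    have hmem : ⁅h, (y' : G)⁆ ∈ (commutator G : Set G) := mem_commutator' h (y' : G)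
    have h2 : (y : G) * ⁅h, (y' : G)⁆ * (y : G)⁻¹ = ⁅h, (y' : G)⁆ := by
      have hc := Subgroup.mem_centralizer_iff.mp y.2 _ hmem
      rw [hc.symm, mul_inv_cancel_right]
    rw [h1, h2]

/-- commutators of two elements of `C_G(G')` are central. -/
private lemma comm_comm_mem_center
    (hG'C : commutator G ≤ Subgroup.centralizer (commutator G : Set G))
    {c x : G} (hc : c ∈ Subgroup.centralizer (commutator G : Set G))
    (hx : x ∈ Subgroup.centralizer (commutator G : Set G)) :
    ⁅c, x⁆ ∈ Subgroup.center G := by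
  rw [Subgroup.mem_center_iff]
  intro h
  have h2 : ⁅⁅h, c⁆, ⁅h, x⁆⁆ = 1 := by
    apply commutatorElement_eq_one_iff_commute.mpr
    have hm1 : ⁅h, c⁆ ∈ commutator G := mem_commutator' h c
    have hm2 : ⁅h, x⁆ ∈ (commutator G : Set G) := mem_commutator' h x
    exact (Subgroup.mem_centralizer_iff.mp (hG'C hm1) _ hm2).symm
  have key : ⁅h, ⁅c, x⁆⁆ = 1 := by
    have hcoe : ((⁅(⟨c, hc⟩ : ↥(Subgroup.centralizer (commutator G : Set G))),
        (⟨x, hx⟩ : ↥(Subgroup.centralizer (commutator G : Set G)))⁆ :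
        ↥(Subgroup.centralizer (commutator G : Set G))) : G) = ⁅c, x⁆ := rfl
    calc ⁅h, ⁅c, x⁆⁆
        = commHomAux h ⁅(⟨c, hc⟩ : ↥(Subgroup.centralizer (commutator G : Set G))),
            (⟨x, hx⟩ : ↥(Subgroup.centralizer (commutator G : Set G)))⁆ := by rw [← hcoe]; rfl
      _ = ⁅commHomAux h (⟨c, hc⟩ : ↥(Subgroup.centralizer (commutator G : Set G))),
            commHomAux h (⟨x, hx⟩ : ↥(Subgroup.centralizer (commutator G : Set G)))⁆ :=
        map_commutatorElement _ _ _
      _ = 1 := h2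
  exact (commutatorElement_eq_one_iff_commute.mp key).eq

end Aux

/-- Let `G` be a finite group with `G' ⊄ Z(G)`, and let `p` be the
smallest prime divisor of `|G|`. Suppose `|G : C_G(G')| = p` and `|G' ∩ Z(G)| = p`.
Then `Z(G)*` is a proper subgroup of `C_G(G')`, and `C_G(G')/Z(G)*` embeds into
`G'Z(G)/Z(G)`: there is a homomorphism from `C_G(G')` to `G'Z(G)/Z(G)` whose kernel is
`Z(G)* ∩ C_G(G')`. -/
theorem starSubgroup_center_lt_centralizer_commutator (G : Type*) [Group G] [Finite G]
    (p : ℕ) (hp : p.Prime)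
    (hmin : ∀ q : ℕ, q.Prime → q ∣ Nat.card G → p ≤ q)
    (hdvd : p ∣ Nat.card G)
    (hns : ¬ commutator G ≤ Subgroup.center G)
    (hidx : (Subgroup.centralizer (commutator G : Set G)).index = p)
    (hGZ : Nat.card ↥(commutator G ⊓ Subgroup.center G) = p) :
    starSubgroup (Subgroup.center G) < Subgroup.centralizer (commutator G : Set G) ∧
    ∃ f : ↥(Subgroup.centralizer (commutator G : Set G)) →*
        ↥((commutator G).map (QuotientGroup.mk' (Subgroup.center G))),
      f.ker = (starSubgroup (Subgroup.center G)).subgroupOf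
        (Subgroup.centralizer (commutator G : Set G)) := by
  have hg'le : commutator G ≤ Subgroup.centralizer (commutator G : Set G) :=
    commutator_le_centralizer_self hp hidx
  have hSle : starSubgroup (Subgroup.center G) ≤ Subgroup.centralizer (commutator G : Set G) :=
    starSubgroup_center_le
  have hCC : ∀ c x : G, c ∈ Subgroup.centralizer (commutator G : Set G) →
      x ∈ Subgroup.centralizer (commutator G : Set G) → ⁅c, x⁆ ∈ Subgroup.center G :=
    fun c x hc hx => comm_comm_mem_center hg'le hc hx
  have hCne : Subgroup.centralizer (commutator G : Set G) ≠ ⊤ := by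
    intro h
    rw [h, Subgroup.index_top] at hidx
    exact hp.ne_one hidx.symm
  obtain ⟨g, hg⟩ : ∃ g : G, g ∉ Subgroup.centralizer (commutator G : Set G) := by
    by_contra h
    push_neg at h
    exact hCne ((Subgroup.eq_top_iff' _).mpr h)
  have htopfun : ∀ a : G, a ∉ Subgroup.centralizer (commutator G : Set G) →
      Subgroup.centralizer (commutator G : Set G) ⊔ Subgroup.closure {a} = ⊤ :=
    fun a ha => sup_closure_singleton_eq_top hp hidx ha
  have hker_key : ∀ x : G, x ∈ Subgroup.centralizer (commutator G : Set G) →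
      ⁅g, x⁆ ∈ Subgroup.center G → x ∈ starSubgroup (Subgroup.center G) := by
    intro x hx hgx
    have hle : Subgroup.centralizer (commutator G : Set G) ⊔ Subgroup.closure {g}
        ≤ commCentral x := by
      apply sup_le
      · intro c hc
        exact hCC c x hc hx
      · rw [Subgroup.closure_le, Set.singleton_subset_iff]
        exact hgx
    show ∀ h : G, ⁅h, x⁆ ∈ Subgroup.center G
    intro h
    exact hle (by rw [htopfun g hg]; exact Subgroup.mem_top h)
  constructor
  · refine lt_of_le_of_ne hSle ?_
    intro heq
    apply hns
    rw [commutator_def, Subgroup.commutator_le]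
    intro a _ b _
    have hflip : ∀ u v : G, ⁅u, v⁆ ∈ Subgroup.center G → ⁅v, u⁆ ∈ Subgroup.center G := by
      intro u v huv
      have h2 : ⁅v, u⁆ = ⁅u, v⁆⁻¹ := by simp only [commutatorElement_def]; group
      rw [h2]; exact Subgroup.inv_mem _ huv
    by_cases ha : a ∈ Subgroup.centralizer (commutator G : Set G)
    · have haS : a ∈ starSubgroup (Subgroup.center G) := by rw [heq]; exact ha
      exact hflip b a (haS b)
    · have htop := htopfun a ha
      have hle2 : Subgroup.centralizer (commutator G : Set G) ⊔ Subgroup.closure {a}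
          ≤ commCentral a := by
        apply sup_le
        · intro c hc
          have hcS : c ∈ starSubgroup (Subgroup.center G) := by rw [heq]; exact hc
          exact hflip a c (hcS a)
        · rw [Subgroup.closure_le, Set.singleton_subset_iff]
          show ⁅a, a⁆ ∈ Subgroup.center G
          have h1 : ⁅a, a⁆ = 1 := by simp only [commutatorElement_def]; group
          rw [h1]; exact Subgroup.one_mem _
      have hbmem : b ∈ commCentral a := hle2 (by rw [htop]; exact Subgroup.mem_top b)
      exact hflip b a hbmem
  · have hmem : ∀ x : ↥(Subgroup.centralizer (commutator G : Set G)),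
        commHomAux g x ∈ commutator G := fun x => mem_commutator' g (x : G)
    refine ⟨((QuotientGroup.mk' (Subgroup.center G)).subgroupMap (commutator G)).comp
      ((commHomAux g).codRestrict (commutator G) hmem), ?_⟩
    ext x
    rw [MonoidHom.mem_ker, Subgroup.mem_subgroupOf]
    constructor
    · intro hfx
      have h2 : ((QuotientGroup.mk' (Subgroup.center G)) ⁅g, (x : G)⁆ :
          G ⧸ Subgroup.center G) = 1 := by
        have h1 := congrArg Subtype.val hfx
        exact h1
      rw [QuotientGroup.mk'_apply, QuotientGroup.eq_one_iff] at h2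
      exact hker_key (x : G) x.2 h2
    · intro hxS
      have hgx : ⁅g, (x : G)⁆ ∈ Subgroup.center G := hxS g
      apply Subtype.ext
      show ((QuotientGroup.mk' (Subgroup.center G)) ⁅g, (x : G)⁆ :
          G ⧸ Subgroup.center G) = 1
      rw [QuotientGroup.mk'_apply, QuotientGroup.eq_one_iff]
      exact hgx
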